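/- arXiv:2107.09860 — 2 statements merged into one kernel-verified Lean document; each statement's English description precedes it below -/
import Mathlib

section
/- Let $q \ge 1$, $\delta > 0$, $\varepsilon > 0$, and $t \in (0, \infty)$. Suppose $\eta : [0, \infty) \to \mathbb{R}^n$ is absolutely continuous with $|\eta(t) - \eta(0)| \ge \delta$ and $f(\eta(s)) \ge \varepsilon$ for all $s \in [0,t]$, where $f$ is a given nonnegative function. Then $\int_0^\infty e^{-s}\big(|\dot\eta(s)|^q + f(\eta(s))\big)\,ds \ge \frac{\delta^q}{e^t\, t^{q-1}} + \varepsilon\,(1 - e^{-t})$. -/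
/-!
By Hölder (Jensen) on `[0, t]`, a curve that moves a distance `δ` in time `t` has
`∫₀ᵗ |η'|^q ≥ δ^q / t^(q-1)`; discounting by `e^{-s} ≥ e^{-t}` on `[0, t]` gives the first term.
The second term is `∫₀ᵗ ε e^{-s} ds`, a lower bound for the running cost there.
-/

open MeasureTheory Real Set

theorem rpow_lintegral_enorm_le {α E : Type*} [MeasurableSpace α] [TopologicalSpace E]
    [ContinuousENorm E] {μ : Measure α} {f : α → E} {q : ℝ} (hq : 1 ≤ q)
    (hf : AEStronglyMeasurable f μ) :
    (∫⁻ a, ‖f a‖ₑ ∂μ) ^ q ≤ μ univ ^ (q - 1) * ∫⁻ a, ‖f a‖ₑ ^ q ∂μ := by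
  have hq0 : 0 < q := one_pos.trans_le hq
  have holder := eLpNorm'_le_eLpNorm'_mul_rpow_measure_univ one_pos hq hf
  simp only [eLpNorm'_eq_lintegral_enorm, ENNReal.rpow_one, div_one] at holder
  calc (∫⁻ a, ‖f a‖ₑ ∂μ) ^ q
      ≤ ((∫⁻ a, ‖f a‖ₑ ^ q ∂μ) ^ (1 / q) * μ univ ^ (1 - 1 / q)) ^ q := by gcongr
    _ = μ univ ^ (q - 1) * ∫⁻ a, ‖f a‖ₑ ^ q ∂μ := by
      rw [ENNReal.mul_rpow_of_nonneg _ _ hq0.le, ← ENNReal.rpow_mul, ← ENNReal.rpow_mul,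
        one_div_mul_cancel hq0.ne', ENNReal.rpow_one, sub_mul, one_mul,
        div_mul_cancel₀ _ hq0.ne', mul_comm]

theorem ofReal_norm_intervalIntegral_rpow_div_le {E : Type*} [NormedAddCommGroup E]
    [NormedSpace ℝ E] {g : ℝ → E} {q t : ℝ} (hq : 1 ≤ q) (ht : 0 < t)
    (hg : AEStronglyMeasurable g (volume.restrict (Ioc 0 t))) :
    ENNReal.ofReal (‖∫ s in 0..t, g s‖ ^ q / t ^ (q - 1)) ≤ ∫⁻ s in Ioc 0 t, ‖g s‖ₑ ^ q := by
  have hq0 : 0 < q := one_pos.trans_le hq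
  have hnorm : ENNReal.ofReal ‖∫ s in 0..t, g s‖ ≤ ∫⁻ s in Ioc 0 t, ‖g s‖ₑ := by
    rw [intervalIntegral.integral_of_le ht.le, ofReal_norm]
    exact enorm_integral_le_lintegral_enorm g
  have holder := rpow_lintegral_enorm_le hq hg
  rw [Measure.restrict_apply_univ, volume_Ioc, sub_zero] at holder
  rw [ENNReal.ofReal_div_of_pos (rpow_pos_of_pos ht _),
    ← ENNReal.ofReal_rpow_of_nonneg (norm_nonneg _) hq0.le,
    ← ENNReal.ofReal_rpow_of_nonneg ht.le (sub_nonneg.2 hq)]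
  refine ENNReal.div_le_of_le_mul ?_
  rw [mul_comm]
  exact (ENNReal.rpow_le_rpow hnorm hq0.le).trans holder

theorem setLIntegral_Ioc_ofReal_mul_exp_neg {ε t : ℝ} (hε : 0 ≤ ε) (ht : 0 ≤ t) :
    ∫⁻ s in Ioc 0 t, ENNReal.ofReal (ε * exp (-s)) = ENNReal.ofReal (ε * (1 - exp (-t))) := by
  have hint : IntegrableOn (fun s => ε * exp (-s)) (Ioc 0 t) :=
    (by fun_prop : Continuous fun s => ε * exp (-s)).integrableOn_Ioc
  rw [← ofReal_integral_eq_lintegral_ofReal hint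
    (Filter.Eventually.of_forall fun s => by positivity),
    ← intervalIntegral.integral_of_le ht, intervalIntegral.integral_const_mul,
    intervalIntegral.integral_comp_neg (fun s => exp s), integral_exp, neg_zero, exp_zero]

theorem stmt_5_general {n : ℕ} (q δ ε t : ℝ) (hq : 1 ≤ q) (hδ : 0 < δ) (hε : 0 < ε) (ht : 0 < t)
    (η η' : ℝ → EuclideanSpace ℝ (Fin n)) (f : EuclideanSpace ℝ (Fin n) → ℝ)
    (hη' : ∀ T > (0 : ℝ), IntegrableOn η' (Set.Icc 0 T))
    (hAC : ∀ x : ℝ, 0 ≤ x → η x = η 0 + ∫ s in (0 : ℝ)..x, η' s)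
    (hsep : δ ≤ ‖η t - η 0‖)
    (hfε : ∀ s ∈ Set.Icc (0 : ℝ) t, ε ≤ f (η s)) :
    ENNReal.ofReal (δ ^ q / (Real.exp t * t ^ (q - 1)) + ε * (1 - Real.exp (-t)))
      ≤ ∫⁻ s in Set.Ioi (0 : ℝ),
          ENNReal.ofReal (Real.exp (-s) * (‖η' s‖ ^ q + f (η s))) := by
  have hq0 : 0 < q := one_pos.trans_le hq
  have hdisp : η t - η 0 = ∫ s in 0..t, η' s := by rw [hAC t ht.le, add_sub_cancel_left]
  have henergy : ENNReal.ofReal (δ ^ q / t ^ (q - 1)) ≤ ∫⁻ s in Ioc 0 t, ‖η' s‖ₑ ^ q := by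
    refine le_trans ?_ (ofReal_norm_intervalIntegral_rpow_div_le hq ht
      ((hη' t ht).mono_set Ioc_subset_Icc_self).aestronglyMeasurable)
    rw [← hdisp]
    gcongr
  have hpointwise : ∀ s ∈ Ioc 0 t, ENNReal.ofReal (exp (-t)) * ‖η' s‖ₑ ^ q
      + ENNReal.ofReal (ε * exp (-s)) ≤ ENNReal.ofReal (exp (-s) * (‖η' s‖ ^ q + f (η s))) := by
    intro s hs
    have hexp : exp (-t) ≤ exp (-s) := exp_le_exp.2 (neg_le_neg hs.2)
    have hfs : ε ≤ f (η s) := hfε s (Ioc_subset_Icc_self hs)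
    have hpow : 0 ≤ ‖η' s‖ ^ q := rpow_nonneg (norm_nonneg _) q
    rw [← ofReal_norm, ENNReal.ofReal_rpow_of_nonneg (norm_nonneg _) hq0.le,
      ← ENNReal.ofReal_mul (exp_nonneg _), ← ENNReal.ofReal_add (by positivity) (by positivity)]
    gcongr
    nlinarith [mul_le_mul_of_nonneg_left hfs (exp_nonneg (-s)),
      mul_le_mul_of_nonneg_right hexp hpow]
  have hsplit : δ ^ q / (exp t * t ^ (q - 1)) = exp (-t) * (δ ^ q / t ^ (q - 1)) := by
    rw [exp_neg]; field_simp
  calc ENNReal.ofReal (δ ^ q / (exp t * t ^ (q - 1)) + ε * (1 - exp (-t)))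
      ≤ ENNReal.ofReal (exp (-t)) * ENNReal.ofReal (δ ^ q / t ^ (q - 1))
        + ENNReal.ofReal (ε * (1 - exp (-t))) := by
        rw [hsplit, ← ENNReal.ofReal_mul (exp_nonneg _)]; exact ENNReal.ofReal_add_le
    _ ≤ ENNReal.ofReal (exp (-t)) * (∫⁻ s in Ioc 0 t, ‖η' s‖ₑ ^ q)
        + ∫⁻ s in Ioc 0 t, ENNReal.ofReal (ε * exp (-s)) := by
        rw [setLIntegral_Ioc_ofReal_mul_exp_neg hε.le ht.le]; gcongr
    _ = ∫⁻ s in Ioc 0 t, (ENNReal.ofReal (exp (-t)) * ‖η' s‖ₑ ^ q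
        + ENNReal.ofReal (ε * exp (-s))) := by
        rw [lintegral_add_right (g := fun s => ENNReal.ofReal (ε * exp (-s))) _ (by fun_prop),
          lintegral_const_mul' _ _ ENNReal.ofReal_ne_top]
    _ ≤ ∫⁻ s in Ioc 0 t, ENNReal.ofReal (exp (-s) * (‖η' s‖ ^ q + f (η s))) :=
        setLIntegral_mono' measurableSet_Ioc hpointwise
    _ ≤ ∫⁻ s in Ioi 0, ENNReal.ofReal (exp (-s) * (‖η' s‖ ^ q + f (η s))) :=
        lintegral_mono_set Ioc_subset_Ioi_self

theorem stmt_5 {n : ℕ} (q δ ε t : ℝ) (hq : 1 ≤ q) (hδ : 0 < δ) (hε : 0 < ε) (ht : 0 < t)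
    (η η' : ℝ → EuclideanSpace ℝ (Fin n)) (f : EuclideanSpace ℝ (Fin n) → ℝ)
    (hf : ∀ x, 0 ≤ f x)
    (hη' : ∀ T > (0 : ℝ), IntegrableOn η' (Set.Icc 0 T))
    (hAC : ∀ x : ℝ, 0 ≤ x → η x = η 0 + ∫ s in (0 : ℝ)..x, η' s)
    (hsep : δ ≤ ‖η t - η 0‖)
    (hfε : ∀ s ∈ Set.Icc (0 : ℝ) t, ε ≤ f (η s)) :
    ENNReal.ofReal (δ ^ q / (Real.exp t * t ^ (q - 1)) + ε * (1 - Real.exp (-t)))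
      ≤ ∫⁻ s in Set.Ioi (0 : ℝ),
          ENNReal.ofReal (Real.exp (-s) * (‖η' s‖ ^ q + f (η s))) :=
  stmt_5_general q δ ε t hq hδ hε ht η η' f hη' hAC hsep hfε
end

section
/- Let $q > 1$ and $y, h \in \mathbb{R}^n$ with $|h| \le |y|$ (and $y \ne 0$). Then $|y + h|^q \le |y|^q + q\,|y|^{q-2}\, (y \cdot h) + C_q\big(|y|^{q-2}|h|^2 + |h|^q\big)$ for a constant $C_q$ depending only on $q$. -/
/-!
With `b = 2 ⟪y, h⟫ + ‖h‖ ^ 2` we have `‖y + h‖ ^ q = (‖y‖ ^ 2 + b) ^ (q / 2)` and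
`|b| ≤ 3 ‖y‖ ‖h‖ ≤ 3 ‖y‖ ^ 2`, so after scaling by `‖y‖ ^ 2` the estimate is the second-order
expansion `(1 + t) ^ p ≤ 1 + p t + C t ^ 2` for `t ∈ [-1, 3]`. That expansion is Bernoulli's
inequality when `p ≤ 1`, and follows for larger `p` by induction on `⌈p⌉`, peeling off one factor
`1 + t` at a time.
-/

open Real

theorem exists_one_add_rpow_le (M : ℝ) {p : ℝ} (hp : 0 ≤ p) :
    ∃ C, 0 ≤ C ∧ ∀ t, -1 ≤ t → t ≤ M → (1 + t) ^ p ≤ 1 + p * t + C * t ^ 2 := by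
  suffices key : ∀ n : ℕ, ∀ p : ℝ, 0 ≤ p → p ≤ n + 1 →
      ∃ C, 0 ≤ C ∧ ∀ t, -1 ≤ t → t ≤ M → (1 + t) ^ p ≤ 1 + p * t + C * t ^ 2 from
    key ⌈p⌉₊ p hp (by linarith [Nat.le_ceil p])
  have bernoulli : ∀ p : ℝ, 0 ≤ p → p ≤ 1 →
      ∃ C, 0 ≤ C ∧ ∀ t, -1 ≤ t → t ≤ M → (1 + t) ^ p ≤ 1 + p * t + C * t ^ 2 :=
    fun p hp₀ hp₁ ↦ ⟨0, le_rfl, fun t ht _ ↦ by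
      simpa using rpow_one_add_le_one_add_mul_self ht hp₀ hp₁⟩
  intro n
  induction n with
  | zero => simpa using bernoulli
  | succ n ih =>
    intro p hp₀ hpn
    rcases le_or_gt p 1 with hp₁ | hp₁
    · exact bernoulli p hp₀ hp₁
    obtain ⟨C, hC, hle⟩ := ih (p - 1) (by linarith) (by push_cast at hpn; linarith)
    refine ⟨p - 1 + C * (1 + |M|), by positivity, fun t ht₁ htM ↦ ?_⟩
    have h₀ : 0 ≤ 1 + t := by linarith
    have hcube : C * t ^ 2 * t ≤ C * t ^ 2 * |M| :=
      mul_le_mul_of_nonneg_left (htM.trans (le_abs_self M)) (by positivity)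
    calc (1 + t) ^ p = (1 + t) * (1 + t) ^ (p - 1) := by
          rw [← rpow_one_add' h₀ (by linarith), add_sub_cancel]
      _ ≤ (1 + t) * (1 + (p - 1) * t + C * t ^ 2) := mul_le_mul_of_nonneg_left (hle t ht₁ htM) h₀
      _ ≤ 1 + p * t + (p - 1 + C * (1 + |M|)) * t ^ 2 := by nlinarith

theorem exists_add_rpow_le (M : ℝ) {p : ℝ} (hp : 0 ≤ p) :
    ∃ C, 0 ≤ C ∧ ∀ a b : ℝ, 0 < a → -a ≤ b → b ≤ M * a →
      (a + b) ^ p ≤ a ^ p + p * a ^ (p - 1) * b + C * a ^ (p - 2) * b ^ 2 := by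
  obtain ⟨C, hC, hle⟩ := exists_one_add_rpow_le M hp
  refine ⟨C, hC, fun a b ha hb₁ hbM ↦ ?_⟩
  have ht₁ : -1 ≤ b / a := by rwa [le_div_iff₀ ha, neg_one_mul]
  have htM : b / a ≤ M := by rwa [div_le_iff₀ ha]
  calc (a + b) ^ p = a ^ p * (1 + b / a) ^ p := by
        rw [← mul_rpow ha.le (by linarith), mul_one_add, mul_div_cancel₀ _ ha.ne']
    _ ≤ a ^ p * (1 + p * (b / a) + C * (b / a) ^ 2) :=
        mul_le_mul_of_nonneg_left (hle _ ht₁ htM) (by positivity)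
    _ = a ^ p + p * a ^ (p - 1) * b + C * a ^ (p - 2) * b ^ 2 := by
        rw [rpow_sub_one ha.ne', rpow_sub ha, rpow_two]
        field_simp

theorem sq_rpow_div_two {r : ℝ} (hr : 0 ≤ r) (x : ℝ) : (r ^ 2) ^ (x / 2) = r ^ x := by
  rw [← rpow_natCast_mul hr, Nat.cast_ofNat, mul_div_cancel₀ x two_ne_zero]

theorem abs_two_inner_add_norm_sq_le {E : Type*} [NormedAddCommGroup E] [InnerProductSpace ℝ E]
    {y h : E} (hhy : ‖h‖ ≤ ‖y‖) :
    |2 * inner ℝ y h + ‖h‖ ^ 2| ≤ 3 * (‖y‖ * ‖h‖) := by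
  have hinner := abs_le.mp (abs_real_inner_le_norm y h)
  have hh : ‖h‖ ^ 2 ≤ ‖y‖ * ‖h‖ := by nlinarith [norm_nonneg h]
  have hyh : 0 ≤ ‖y‖ * ‖h‖ := by positivity
  exact abs_le.mpr ⟨by linarith [sq_nonneg ‖h‖], by linarith⟩

theorem exists_norm_add_rpow_le {q : ℝ} (hq : 0 ≤ q) :
    ∃ C, 0 ≤ C ∧ ∀ {E : Type*} [NormedAddCommGroup E] [InnerProductSpace ℝ E] (y h : E),
      y ≠ 0 → ‖h‖ ≤ ‖y‖ →
      ‖y + h‖ ^ q ≤ ‖y‖ ^ q + q * ‖y‖ ^ (q - 2) * inner ℝ y h + C * ‖y‖ ^ (q - 2) * ‖h‖ ^ 2 := by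
  obtain ⟨C, hC, hle⟩ := exists_add_rpow_le 3 (by positivity : 0 ≤ q / 2)
  refine ⟨q / 2 + 9 * C, by positivity, fun y h hy hhy ↦ ?_⟩
  have hr : 0 < ‖y‖ := norm_pos_iff.mpr hy
  have hsq : ‖y + h‖ ^ 2 = ‖y‖ ^ 2 + (2 * inner ℝ y h + ‖h‖ ^ 2) := by
    rw [norm_add_sq_real]; ring
  set b := 2 * inner ℝ y h + ‖h‖ ^ 2
  have hb := abs_le.mp (abs_two_inner_add_norm_sq_le hhy)
  have hb₁ : -‖y‖ ^ 2 ≤ b := by nlinarith [sq_nonneg ‖y + h‖]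
  have hb₃ : b ≤ 3 * ‖y‖ ^ 2 := by nlinarith [norm_nonneg h]
  have hb_sq : b ^ 2 ≤ 9 * ‖y‖ ^ 2 * ‖h‖ ^ 2 := by
    linear_combination sq_le_sq' hb.1 hb.2
  have hpow₁ : (‖y‖ ^ 2) ^ (q / 2 - 1) = ‖y‖ ^ (q - 2) := by
    rw [← sq_rpow_div_two (norm_nonneg y)]; ring_nf
  have hpow₂ : (‖y‖ ^ 2) ^ (q / 2 - 2) = ‖y‖ ^ (q - 4) := by
    rw [← sq_rpow_div_two (norm_nonneg y)]; ring_nf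
  have hrem : (‖y‖ ^ 2) ^ (q / 2 - 2) * b ^ 2 ≤ 9 * ‖y‖ ^ (q - 2) * ‖h‖ ^ 2 := by
    calc (‖y‖ ^ 2) ^ (q / 2 - 2) * b ^ 2 ≤ ‖y‖ ^ (q - 4) * (9 * ‖y‖ ^ 2 * ‖h‖ ^ 2) := by
          rw [hpow₂]; exact mul_le_mul_of_nonneg_left hb_sq (by positivity)
      _ = 9 * ‖y‖ ^ (q - 2) * ‖h‖ ^ 2 := by
          rw [show q - 2 = q - 4 + 2 by ring, rpow_add hr, rpow_two]; ring
  calc ‖y + h‖ ^ q = (‖y‖ ^ 2 + b) ^ (q / 2) := by rw [← hsq, sq_rpow_div_two (norm_nonneg _)]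
    _ ≤ (‖y‖ ^ 2) ^ (q / 2) + q / 2 * (‖y‖ ^ 2) ^ (q / 2 - 1) * b
          + C * (‖y‖ ^ 2) ^ (q / 2 - 2) * b ^ 2 := hle _ _ (by positivity) hb₁ hb₃
    _ ≤ _ := by
        rw [sq_rpow_div_two (norm_nonneg _), hpow₁]
        linear_combination mul_le_mul_of_nonneg_left hrem hC

theorem stmt_18 (q : ℝ) (hq : 1 < q) :
    ∃ Cq : ℝ, 0 < Cq ∧ ∀ (n : ℕ) (y h : EuclideanSpace ℝ (Fin n)), y ≠ 0 → ‖h‖ ≤ ‖y‖ →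
      ‖y + h‖ ^ q ≤ ‖y‖ ^ q + q * ‖y‖ ^ (q - 2) * (inner ℝ y h : ℝ)
        + Cq * (‖y‖ ^ (q - 2) * ‖h‖ ^ 2 + ‖h‖ ^ q) := by
  obtain ⟨C, hC, hle⟩ := exists_norm_add_rpow_le (zero_le_one.trans hq.le)
  refine ⟨C + 1, by positivity, fun n y h hy hhy ↦ ?_⟩
  have hquad : 0 ≤ ‖y‖ ^ (q - 2) * ‖h‖ ^ 2 := by positivity
  have hpow : 0 ≤ (C + 1) * ‖h‖ ^ q := by positivity
  linear_combination hle y h hy hhy + hquad + hpow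
end
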